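/- As θ ranges over [0,2π)², the eigenvalues μ_±(θ) = 3/4 ± (1/4)√(3 + 2κ(θ)) with κ(θ) = cos θ₁ + cos θ₂ + cos(θ₁-θ₂) sweep out exactly the intervals B₋ = [0, 3/4] and B₊ = [3/4, 3/2]. Consequently, the union of all eigenvalues of the Floquet matrices Δ_θ together with the flat band {3/2} equals [0, 3/2]. -/

import Mathlib

/-!
Writing `κ` for `kagomeKappa`, both bands are `3/4 ± √(3 + 2κ)/4`, so everything reduces to
showing that `√(3 + 2κ)` takes exactly the values `[0, 3]` on the torus. The bound `κ ≤ 3` gives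
one inclusion. For the other, along the curve `θ = (t, 2t)` one has
`3 + 2κ = (1 + 2 cos t)²`, and `1 + 2 cos t` already covers `[0, 3]` for `t ∈ [0, π)`.
-/

open Set

/-- `κ(θ) = cos θ₁ + cos θ₂ + cos(θ₁-θ₂)`. -/
noncomputable def kagomeKappa (θ : ℝ × ℝ) : ℝ :=
  Real.cos θ.1 + Real.cos θ.2 + Real.cos (θ.1 - θ.2)

/-- The lower Floquet band function `μ₋(θ) = 3/4 - (1/4)√(3+2κ(θ))`. -/
noncomputable def kagomeMuMinus (θ : ℝ × ℝ) : ℝ :=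
  3 / 4 - Real.sqrt (3 + 2 * kagomeKappa θ) / 4

/-- The upper Floquet band function `μ₊(θ) = 3/4 + (1/4)√(3+2κ(θ))`. -/
noncomputable def kagomeMuPlus (θ : ℝ × ℝ) : ℝ :=
  3 / 4 + Real.sqrt (3 + 2 * kagomeKappa θ) / 4

noncomputable def kagomeSqrtDisc (θ : ℝ × ℝ) : ℝ :=
  Real.sqrt (3 + 2 * kagomeKappa θ)

theorem Set.biUnion_pair_eq_image_union {α β : Type*} (s : Set α) (f g : α → β) :
    ⋃ x ∈ s, ({f x, g x} : Set β) = f '' s ∪ g '' s := by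
  ext y
  simp only [mem_iUnion, mem_insert_iff, mem_singleton_iff, exists_prop, mem_union, mem_image,
    and_or_left, exists_or, eq_comm]

theorem kagomeKappa_le_three (θ : ℝ × ℝ) : kagomeKappa θ ≤ 3 := by
  have h₁ := Real.cos_le_one θ.1
  have h₂ := Real.cos_le_one θ.2
  have h₃ := Real.cos_le_one (θ.1 - θ.2)
  unfold kagomeKappa
  linarith

theorem kagomeSqrtDisc_le_three (θ : ℝ × ℝ) : kagomeSqrtDisc θ ≤ 3 :=
  Real.sqrt_le_iff.2 ⟨by norm_num, by nlinarith [kagomeKappa_le_three θ]⟩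

theorem three_add_two_mul_kagomeKappa_diag (t : ℝ) :
    3 + 2 * kagomeKappa (t, 2 * t) = (1 + 2 * Real.cos t) ^ 2 := by
  rw [kagomeKappa, show t - 2 * t = -t by ring, Real.cos_neg, Real.cos_two_mul]
  ring

theorem Icc_subset_image_kagomeSqrtDisc :
    Icc 0 3 ⊆ kagomeSqrtDisc '' (Ico 0 (2 * Real.pi) ×ˢ Ico 0 (2 * Real.pi)) := by
  rintro s ⟨hs₀, hs₃⟩
  set t := Real.arccos ((s - 1) / 2)
  have hcos : Real.cos t = (s - 1) / 2 := Real.cos_arccos (by linarith) (by linarith)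
  have ht₀ : 0 ≤ t := Real.arccos_nonneg _
  have htπ : t < Real.pi :=
    (Real.arccos_le_pi _).lt_of_ne fun h ↦ by linarith [Real.arccos_eq_pi.1 h]
  refine ⟨(t, 2 * t), ⟨⟨ht₀, by linarith⟩, ⟨by linarith, by linarith⟩⟩, ?_⟩
  rw [kagomeSqrtDisc, three_add_two_mul_kagomeKappa_diag, hcos,
    show 1 + 2 * ((s - 1) / 2) = s by ring, Real.sqrt_sq hs₀]

theorem image_kagomeSqrtDisc :
    kagomeSqrtDisc '' (Ico 0 (2 * Real.pi) ×ˢ Ico 0 (2 * Real.pi)) = Icc 0 3 := by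
  refine Subset.antisymm ?_ Icc_subset_image_kagomeSqrtDisc
  rintro _ ⟨θ, -, rfl⟩
  exact ⟨Real.sqrt_nonneg _, kagomeSqrtDisc_le_three θ⟩

theorem image_kagomeMuMinus :
    kagomeMuMinus '' (Ico 0 (2 * Real.pi) ×ˢ Ico 0 (2 * Real.pi)) = Icc 0 (3 / 4) := by
  ext x
  have hx : x ∈ Icc 0 (3 / 4) ↔ 3 - 4 * x ∈ Icc 0 3 := by
    simp only [mem_Icc]
    constructor <;> rintro ⟨_, _⟩ <;> constructor <;> linarith
  rw [hx, ← image_kagomeSqrtDisc]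
  simp only [mem_image, kagomeMuMinus, kagomeSqrtDisc]
  exact exists_congr fun θ ↦ and_congr_right fun _ ↦ by constructor <;> intro h <;> linarith

theorem image_kagomeMuPlus :
    kagomeMuPlus '' (Ico 0 (2 * Real.pi) ×ˢ Ico 0 (2 * Real.pi)) = Icc (3 / 4) (3 / 2) := by
  ext x
  have hx : x ∈ Icc (3 / 4) (3 / 2) ↔ 4 * x - 3 ∈ Icc 0 3 := by
    simp only [mem_Icc]
    constructor <;> rintro ⟨_, _⟩ <;> constructor <;> linarith
  rw [hx, ← image_kagomeSqrtDisc]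
  simp only [mem_image, kagomeMuPlus, kagomeSqrtDisc]
  exact exists_congr fun θ ↦ and_congr_right fun _ ↦ by constructor <;> intro h <;> linarith

/-- As `θ` ranges over `[0,2π)²`, the eigenvalue branches `μ₋` and `μ₊` sweep
out exactly `B₋ = [0,3/4]` and `B₊ = [3/4,3/2]`; consequently the union of all eigenvalues
of the Floquet matrices together with the flat band `{3/2}` equals `[0,3/2]`. -/
theorem kagome_band_structure :
    kagomeMuMinus '' (Ico 0 (2 * Real.pi) ×ˢ Ico 0 (2 * Real.pi)) = Icc 0 (3 / 4) ∧
    kagomeMuPlus '' (Ico 0 (2 * Real.pi) ×ˢ Ico 0 (2 * Real.pi)) = Icc (3 / 4) (3 / 2) ∧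
    ((⋃ θ ∈ Ico 0 (2 * Real.pi) ×ˢ Ico 0 (2 * Real.pi),
        ({kagomeMuMinus θ, kagomeMuPlus θ} : Set ℝ)) ∪ {3 / 2}) = Icc 0 (3 / 2) := by
  refine ⟨image_kagomeMuMinus, image_kagomeMuPlus, ?_⟩
  rw [biUnion_pair_eq_image_union, image_kagomeMuMinus, image_kagomeMuPlus,
    Icc_union_Icc_eq_Icc (by norm_num) (by norm_num)]
  exact union_eq_left.2 (singleton_subset_iff.2 ⟨by norm_num, le_rfl⟩)
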